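/- Let b ≥ 2 be an integer, let g ≥ 1 be an integer, and let n ≥ 6bg be an integer. Then for every real x ≥ 2n − 2bg, the quadratic ψ(x) = x² + (n − 4bg − 4g + 4)x − 2n² + 4bgn + 4gn + 2n − 2b²g² − 4bg² − 2bg − 4g satisfies ψ(x) > 0. -/

import Mathlib

open scoped Classical ENNReal

noncomputable def signlessLaplacian {V : Type*} [Fintype V] [DecidableEq V]
    (G : SimpleGraph V) : Matrix V V ℝ :=
  Matrix.of fun u v =>
    (if u = v then ((G.neighborSet u).ncard : ℝ) else 0) + (if G.Adj u v then 1 else 0)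

/-- The `Q`-index: the largest eigenvalue of the signless Laplacian `D(G) + A(G)`. -/
noncomputable def qIndex {V : Type*} [Fintype V] [DecidableEq V]
    (G : SimpleGraph V) : ℝ :=
  sSup (spectrum ℝ (signlessLaplacian G))

/-- `K_s ∨ (K_{ns 0} ∪ K_{ns 1} ∪ ⋯)` : the join of a clique of size `s` with a
disjoint union of cliques of sizes `ns i`. -/
def joinCliques (s : ℕ) {t : ℕ} (ns : Fin t → ℕ) :
    SimpleGraph (Fin s ⊕ (Σ i : Fin t, Fin (ns i))) where
  Adj u v := u ≠ v ∧ ((∃ a, u = Sum.inl a) ∨ (∃ a, v = Sum.inl a) ∨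
      ∃ (i : Fin t) (x y : Fin (ns i)), u = Sum.inr ⟨i, x⟩ ∧ v = Sum.inr ⟨i, y⟩)
  symm := Std.Symm.mk <| by
    rintro u v ⟨hne, h⟩
    refine ⟨hne.symm, ?_⟩
    rcases h with ⟨a, ha⟩ | ⟨a, ha⟩ | ⟨i, x, y, hx, hy⟩
    · exact Or.inr (Or.inl ⟨a, ha⟩)
    · exact Or.inl ⟨a, ha⟩
    · exact Or.inr (Or.inr ⟨i, y, x, hy, hx⟩)
  loopless := ⟨fun u h => h.1 rfl⟩

/-- `c(G - S)`: number of connected components after deleting the vertex set `S`. -/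
noncomputable def numComp {V : Type*} (G : SimpleGraph V) (S : Set V) : ℕ :=
  Nat.card (G.induce Sᶜ).ConnectedComponent

/-- The `l`-toughness `t_l(G) = min { |S| / c(G-S) : S ⊂ V(G), c(G-S) ≥ l }`,
with value `+∞` (the empty infimum in `ℝ≥0∞`) if no such `S` exists. -/
noncomputable def lToughness {V : Type*} [Fintype V] (G : SimpleGraph V) (l : ℕ) : ℝ≥0∞ :=
  ⨅ (S : Finset V) (_ : l ≤ numComp G (S : Set V)),
    (S.card : ℝ≥0∞) / (numComp G (S : Set V) : ℝ≥0∞)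

/-! ψ is a monic quadratic whose vertex lies left of `x₀ = 2n − 2bg`, so it increases on
`[x₀, ∞)`, and `ψ(x₀) = n(4n − 14bg − 4g) + (10n − 10bg − 4g) + 10b²g² + 4bg²` is positive
as soon as `n ≥ 6bg`. -/

theorem sq_add_mul_le_sq_add_mul {c x₀ x : ℝ} (hc : 0 ≤ 2 * x₀ + c) (hx : x₀ ≤ x) :
    x₀ ^ 2 + c * x₀ ≤ x ^ 2 + c * x := by
  have key : x ^ 2 + c * x - (x₀ ^ 2 + c * x₀) = (x - x₀) * (x + x₀ + c) := by ring
  exact sub_nonneg.1 (key ▸ mul_nonneg (sub_nonneg.2 hx) (by linarith))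

def psi (b g n x : ℝ) : ℝ :=
  x ^ 2 + (n - 4 * b * g - 4 * g + 4) * x
    - 2 * n ^ 2 + 4 * b * g * n + 4 * g * n + 2 * n
    - 2 * b ^ 2 * g ^ 2 - 4 * b * g ^ 2 - 2 * b * g - 4 * g

theorem psi_le_psi {b g n x₀ x : ℝ} (hc : 0 ≤ 2 * x₀ + (n - 4 * b * g - 4 * g + 4))
    (hx : x₀ ≤ x) : psi b g n x₀ ≤ psi b g n x := by
  unfold psi
  linarith [sq_add_mul_le_sq_add_mul hc hx]

theorem psi_two_mul_sub_pos {b g n : ℝ} (hb : 1 ≤ b) (hg : 1 ≤ g) (hn : 6 * b * g ≤ n) :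
    0 < psi b g n (2 * n - 2 * b * g) := by
  have hvalue : psi b g n (2 * n - 2 * b * g) =
      n * (4 * n - 14 * b * g - 4 * g) + (10 * n - 10 * b * g - 4 * g)
        + 10 * b ^ 2 * g ^ 2 + 4 * b * g ^ 2 := by
    unfold psi; ring
  have hbg : 1 ≤ b * g := one_le_mul_of_one_le_of_one_le hb hg
  have hn_pos : 0 < n := by linarith
  have hlead : 0 < 4 * n - 14 * b * g - 4 * g := by nlinarith
  rw [hvalue]
  nlinarith [mul_pos hn_pos hlead]

/-- For integers `b ≥ 2`, `g ≥ 1` and `n ≥ 6bg`: for every real `x ≥ 2n − 2bg`, the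
quadratic `ψ(x) = x² + (n − 4bg − 4g + 4)x − 2n² + 4bgn + 4gn + 2n − 2b²g² − 4bg²
− 2bg − 4g` is positive. -/
theorem statement15 (b g n : ℕ) (hb : 2 ≤ b) (hg : 1 ≤ g) (hn : 6 * b * g ≤ n) :
    ∀ x : ℝ, 2 * (n : ℝ) - 2 * b * g ≤ x →
      0 < x ^ 2 + ((n : ℝ) - 4 * b * g - 4 * g + 4) * x
          - 2 * (n : ℝ) ^ 2 + 4 * b * g * n + 4 * g * n + 2 * n
          - 2 * (b : ℝ) ^ 2 * g ^ 2 - 4 * b * g ^ 2 - 2 * b * g - 4 * g := by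
  intro x hx
  have hb' : (1 : ℝ) ≤ b := by exact_mod_cast (by omega : 1 ≤ b)
  have hg' : (1 : ℝ) ≤ g := by exact_mod_cast hg
  have hn' : 6 * (b : ℝ) * g ≤ n := by exact_mod_cast hn
  have hvertex : 0 ≤ 2 * (2 * (n : ℝ) - 2 * b * g) + (n - 4 * b * g - 4 * g + 4) := by
    nlinarith
  exact (psi_two_mul_sub_pos hb' hg' hn').trans_le (psi_le_psi hvertex hx)
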